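/- Let X = X(G, C) be a normal Cayley graph of a finite group G and let H be the maximal strongly cospectral subgroup (the subgroup of vertices strongly cospectral to the identity). If m is the multiplicity of any eigenvalue of X, then |H| ≤ |G|/m. -/

import Mathlib

open Matrix

/-- `E` is the orthogonal projection onto the eigenspace of `A` for the eigenvalue `μ`. -/
def IsEigenProjection {V : Type*} [Fintype V] (A : Matrix V V ℝ) (μ : ℝ)
    (E : Matrix V V ℝ) : Prop :=
  E * E = E ∧ E.IsSymm ∧
    (∀ x : V → ℝ, A.mulVec (E.mulVec x) = μ • E.mulVec x) ∧
    (∀ y : V → ℝ, A.mulVec y = μ • y → E.mulVec y = y)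

/-- Vertices `u` and `v` are strongly cospectral: `E e_u = ± E e_v` for every spectral
idempotent `E` of `A`. -/
def StronglyCospectral {V : Type*} [Fintype V] [DecidableEq V]
    (A : Matrix V V ℝ) (u v : V) : Prop :=
  ∀ (μ : ℝ) (E : Matrix V V ℝ), IsEigenProjection A μ E →
    E.mulVec (Pi.single u 1) = E.mulVec (Pi.single v 1) ∨
    E.mulVec (Pi.single u 1) = -E.mulVec (Pi.single v 1)

/-- The adjacency matrix of the Cayley graph `X(G, C)`: `g ~ h` iff `h * g⁻¹ ∈ C`. -/
def cayleyAdj {G : Type*} [Group G] [Fintype G] [DecidableEq G] (C : Finset G) :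
    Matrix G G ℝ :=
  Matrix.of fun g h => if h * g⁻¹ ∈ C then 1 else 0

/-!
Let `E` be the matrix of the orthogonal projection onto the `μ`-eigenspace. Right translations
are automorphisms of the Cayley graph, so they fix `E`, and the diagonal of `E` is constant,
equal to `m / |G|` by the trace. As `E` is a symmetric idempotent, the squares of the entries of
row `1` sum to `E 1 1`, while strong cospectrality of `1` and `h` forces `E 1 h = ± E 1 1`.
Hence `|H| * E 1 1 ^ 2 ≤ E 1 1`, that is, `m * |H| ≤ |G|`.
-/

open WithLp

namespace Matrix

variable {V : Type*} [Fintype V] [DecidableEq V] (A : Matrix V V ℝ) (μ : ℝ)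

def euclideanEigenspace : Submodule ℝ (EuclideanSpace ℝ V) :=
  (Module.End.eigenspace (toLin' A) μ).comap (WithLp.linearEquiv 2 ℝ (V → ℝ)).toLinearMap

noncomputable def eigenProjection : Matrix V V ℝ :=
  (toEuclideanCLM (𝕜 := ℝ) (n := V)).symm (A.euclideanEigenspace μ).starProjection

lemma eigenProjection_mulVec (x : V → ℝ) :
    A.eigenProjection μ *ᵥ x = ofLp ((A.euclideanEigenspace μ).starProjection (toLp 2 x)) := by
  rw [← ofLp_toEuclideanCLM, eigenProjection, StarAlgEquiv.apply_symm_apply]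

lemma mem_euclideanEigenspace {x : EuclideanSpace ℝ V} :
    x ∈ A.euclideanEigenspace μ ↔ A *ᵥ ofLp x = μ • ofLp x := by
  rw [euclideanEigenspace, Submodule.mem_comap, Module.End.mem_eigenspace_iff, toLin'_apply]
  rfl

lemma isProj_starProjection_euclideanEigenspace :
    LinearMap.IsProj (A.euclideanEigenspace μ)
      ((A.euclideanEigenspace μ).starProjection : EuclideanSpace ℝ V →ₗ[ℝ] _) :=
  ⟨Submodule.starProjection_apply_mem _, fun _ => Submodule.starProjection_eq_self_iff.mpr⟩

lemma isEigenProjection_eigenProjection : IsEigenProjection A μ (A.eigenProjection μ) := by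
  set W := A.euclideanEigenspace μ
  refine ⟨?_, ?_, fun x => ?_, fun y hy => ?_⟩
  · rw [eigenProjection, ← map_mul, W.isIdempotentElem_starProjection.eq]
  · have h : star (A.eigenProjection μ) = A.eigenProjection μ := by
      apply EquivLike.injective (toEuclideanCLM (𝕜 := ℝ) (n := V))
      rw [map_star, eigenProjection, StarAlgEquiv.apply_symm_apply,
        (isSelfAdjoint_starProjection W).star_eq]
    rw [IsSymm, ← conjTranspose_eq_transpose_of_trivial]
    exact h
  · rw [eigenProjection_mulVec, ← mem_euclideanEigenspace]
    exact W.starProjection_apply_mem _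
  · rw [eigenProjection_mulVec, Submodule.starProjection_eq_self_iff.mpr]
    exact (A.mem_euclideanEigenspace μ).mpr hy

lemma trace_eigenProjection :
    (A.eigenProjection μ).trace = Module.finrank ℝ (Module.End.eigenspace (toLin' A) μ) := by
  have hconj : toLin' (A.eigenProjection μ) = (WithLp.linearEquiv 2 ℝ (V → ℝ)).conj
      ((A.euclideanEigenspace μ).starProjection : EuclideanSpace ℝ V →ₗ[ℝ] _) :=
    LinearMap.ext (A.eigenProjection_mulVec μ)
  rw [← trace_toLin'_eq, hconj, LinearMap.trace_conj',
    (A.isProj_starProjection_euclideanEigenspace μ).trace, euclideanEigenspace,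
    Submodule.comap_equiv_eq_map_symm, LinearEquiv.finrank_map_eq]

end Matrix

namespace IsEigenProjection

variable {V : Type*} [Fintype V] {A E F : Matrix V V ℝ} {μ : ℝ}

lemma mul_eq_right (hE : IsEigenProjection A μ E) (hF : IsEigenProjection A μ F) :
    E * F = F :=
  mulVec_injective <| funext fun x => by rw [← mulVec_mulVec, hE.2.2.2 _ (hF.2.2.1 x)]

lemma unique (hE : IsEigenProjection A μ E) (hF : IsEigenProjection A μ F) : E = F :=
  calc E = (F * E)ᵀ := by rw [hF.mul_eq_right hE, hE.2.1.eq]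
    _ = E * F := by rw [transpose_mul, hE.2.1.eq, hF.2.1.eq]
    _ = F := hE.mul_eq_right hF

lemma submatrix (hE : IsEigenProjection A μ E) (σ : V ≃ V) (hA : A.submatrix σ σ = A) :
    IsEigenProjection A μ (E.submatrix σ σ) := by
  have hAσ : ∀ x, A *ᵥ (x ∘ σ) = (A *ᵥ x) ∘ σ := fun x => by
    conv_lhs => rw [← hA]
    rw [submatrix_mulVec_equiv, Function.comp_assoc, σ.self_comp_symm, Function.comp_id]
  refine ⟨?_, hE.2.1.submatrix σ, fun x => ?_, fun y hy => ?_⟩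
  · rw [submatrix_mul_equiv, hE.1]
  · rw [submatrix_mulVec_equiv, hAσ, hE.2.2.1]
    rfl
  · have hyσ : A *ᵥ (y ∘ σ.symm) = μ • (y ∘ σ.symm) := by
      have h := congrArg (· ∘ σ.symm) (hAσ (y ∘ σ.symm))
      simp only [Function.comp_assoc, σ.symm_comp_self, σ.self_comp_symm, Function.comp_id] at h
      rw [← h, hy]
      rfl
    rw [submatrix_mulVec_equiv, hE.2.2.2 _ hyσ, Function.comp_assoc, σ.symm_comp_self,
      Function.comp_id]

lemma apply_apply_eq (hE : IsEigenProjection A μ E) (σ : V ≃ V) (hA : A.submatrix σ σ = A)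
    (u v : V) : E (σ u) (σ v) = E u v :=
  congrFun (congrFun ((hE.submatrix σ hA).unique hE) u) v

lemma sum_sq_apply (hE : IsEigenProjection A μ E) (u : V) : ∑ v, E u v ^ 2 = E u u := by
  conv_rhs => rw [← hE.1, mul_apply]
  refine Finset.sum_congr rfl fun v _ => ?_
  rw [sq, ← hE.2.1.apply u v]

lemma card_mul_apply_self_eq_trace (hE : IsEigenProjection A μ E) (u : V)
    (htrans : ∀ v, ∃ σ : V ≃ V, A.submatrix σ σ = A ∧ σ u = v) :
    Fintype.card V * E u u = E.trace := by
  have hdiag : ∀ v, E v v = E u u := fun v => by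
    obtain ⟨σ, hA, rfl⟩ := htrans v
    exact hE.apply_apply_eq σ hA u u
  simp [trace, hdiag]

lemma sq_apply_eq [DecidableEq V] (hE : IsEigenProjection A μ E) {u v : V}
    (huv : StronglyCospectral A u v) : E u v ^ 2 = E u u ^ 2 := by
  refine (sq_eq_sq_iff_eq_or_eq_neg.mpr ?_).symm
  rcases huv μ E hE with h | h <;> [left; right] <;>
    simpa only [mulVec_single_one, col_apply, Pi.neg_apply] using congrFun h u

lemma card_mul_apply_self_le_one [DecidableEq V] (hE : IsEigenProjection A μ E) (u : V)
    (S : Finset V) (hS : ∀ v ∈ S, StronglyCospectral A u v) : S.card * E u u ≤ 1 := by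
  have hsq : S.card * E u u ^ 2 ≤ E u u :=
    calc S.card * E u u ^ 2 = ∑ v ∈ S, E u v ^ 2 := by
          rw [Finset.sum_congr rfl fun v hv => hE.sq_apply_eq (hS v hv), Finset.sum_const,
            nsmul_eq_mul]
      _ ≤ ∑ v, E u v ^ 2 :=
          Finset.sum_le_sum_of_subset_of_nonneg S.subset_univ fun _ _ _ => sq_nonneg _
      _ = E u u := hE.sum_sq_apply u
  have hnonneg : 0 ≤ E u u := hE.sum_sq_apply u ▸ Finset.sum_nonneg fun v _ => sq_nonneg (E u v)
  rcases hnonneg.eq_or_lt with h | h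
  · simp [← h]
  · nlinarith

end IsEigenProjection

lemma cayleyAdj_submatrix_mulRight {G : Type*} [Group G] [Fintype G] [DecidableEq G]
    (C : Finset G) (x : G) :
    (cayleyAdj C).submatrix (Equiv.mulRight x) (Equiv.mulRight x) = cayleyAdj C := by
  ext g h
  simp [cayleyAdj, mul_assoc]

theorem stmt9_general {G : Type*} [Group G] [Fintype G] [DecidableEq G] (C : Finset G)
    (H : Subgroup G)
    (hH : (H : Set G) = {g : G | StronglyCospectral (cayleyAdj C) 1 g})
    (μ : ℝ) :
    Module.finrank ℝ (Module.End.eigenspace (Matrix.toLin' (cayleyAdj C)) μ) * Nat.card H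
      ≤ Fintype.card G := by
  set E := (cayleyAdj C).eigenProjection μ
  have hE : IsEigenProjection (cayleyAdj C) μ E := isEigenProjection_eigenProjection _ μ
  have hrank : Fintype.card G * E 1 1
      = Module.finrank ℝ (Module.End.eigenspace (Matrix.toLin' (cayleyAdj C)) μ) := by
    rw [hE.card_mul_apply_self_eq_trace 1 fun g =>
      ⟨Equiv.mulRight g, cayleyAdj_submatrix_mulRight C g, one_mul g⟩, trace_eigenProjection]
  have hcard : (Nat.card H : ℝ) * E 1 1 ≤ 1 := by
    classical
    rw [← SetLike.coe_sort_coe, Nat.card_eq_card_toFinset]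
    refine hE.card_mul_apply_self_le_one 1 _ fun g hg => ?_
    rw [Set.mem_toFinset, hH] at hg
    exact hg
  have hreal : (Module.finrank ℝ (Module.End.eigenspace (Matrix.toLin' (cayleyAdj C)) μ) : ℝ)
      * Nat.card H ≤ Fintype.card G := by
    rw [← hrank, mul_assoc, mul_comm (E 1 1)]
    exact mul_le_of_le_one_right (Nat.cast_nonneg _) hcard
  exact_mod_cast hreal

theorem stmt9 {G : Type*} [Group G] [Fintype G] [DecidableEq G] (C : Finset G)
    (h1 : (1 : G) ∉ C) (hinv : ∀ c ∈ C, c⁻¹ ∈ C)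
    (hnorm : ∀ x : G, ∀ c ∈ C, x⁻¹ * c * x ∈ C)
    (H : Subgroup G)
    (hH : (H : Set G) = {g : G | StronglyCospectral (cayleyAdj C) 1 g})
    (μ : ℝ) (hμ : Module.End.HasEigenvalue (Matrix.toLin' (cayleyAdj C)) μ) :
    Module.finrank ℝ (Module.End.eigenspace (Matrix.toLin' (cayleyAdj C)) μ) * Nat.card H
      ≤ Fintype.card G :=
  stmt9_general C H hH μ
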